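/- arXiv:math/9910120 — 5 statements merged into one kernel-verified Lean document; each statement's English description precedes it below -/
import Mathlib

section
/- The function K₀ is twice differentiable on (0,∞) and satisfies the modified Bessel equation of order zero: for every r > 0, K₀''(r) + (1/r)·K₀'(r) − K₀(r) = 0. -/
/-! Differentiating under the integral sign twice gives `K₀' = -K₁` and `K₀'' = K₂`, where
`Kₙ(r) = ∫₁^∞ e^{-rt} tⁿ (t² - 1)^{-1/2} dt`; near `r` the integrand is dominated by the
integrand at `r/2`, which is integrable (an inverse square root singularity at `t = 1`,
exponential decay at infinity). Integrating
`d/dt (e^{-rt} √(t² - 1)) = e^{-rt} t / √(t² - 1) - r e^{-rt} √(t² - 1)` over `(1, ∞)`, and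
writing `√(t² - 1) = (t² - 1) / √(t² - 1)`, gives `K₁ = r (K₂ - K₀)`, which is the Bessel
equation. -/

noncomputable def K0 (r : ℝ) : ℝ :=
  ∫ t in Set.Ioi (1 : ℝ), Real.exp (-r * t) / Real.sqrt (t ^ 2 - 1)

open Real MeasureTheory Set Filter Topology

noncomputable def K0Integrand (n : ℕ) (r t : ℝ) : ℝ :=
  exp (-r * t) * t ^ n / √(t ^ 2 - 1)

noncomputable def K0Moment (n : ℕ) (r : ℝ) : ℝ :=
  ∫ t in Ioi 1, K0Integrand n r t

lemma K0_eq_K0Moment_zero : K0 = K0Moment 0 := by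
  funext r
  simp [K0, K0Moment, K0Integrand]

lemma sqrt_sq_sub_one_pos {t : ℝ} (ht : 1 < t) : 0 < √(t ^ 2 - 1) :=
  sqrt_pos.2 (by nlinarith)

section Integrability

variable (n : ℕ) {r : ℝ}

lemma continuousOn_K0Integrand (r : ℝ) : ContinuousOn (K0Integrand n r) (Ioi 1) :=
  ContinuousOn.div (by fun_prop) (by fun_prop) fun _ ht => (sqrt_sq_sub_one_pos ht).ne'

lemma integrableOn_Ioc_K0Integrand (hr : 0 ≤ r) : IntegrableOn (K0Integrand n r) (Ioc 1 2) := by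
  have hdom : IntegrableOn (fun t : ℝ => 2 ^ n * (t - 1) ^ (-(1 / 2) : ℝ)) (Ioc 1 2) := by
    have h := (intervalIntegral.intervalIntegrable_rpow' (a := 0) (b := 1)
      (r := -(1 / 2)) (by norm_num)).comp_sub_right 1
    norm_num at h
    exact ((intervalIntegrable_iff_integrableOn_Ioc_of_le one_le_two).1 h).const_mul _
  refine hdom.mono' (((continuousOn_K0Integrand n r).mono Ioc_subset_Ioi_self).aestronglyMeasurable
    measurableSet_Ioc) ((ae_restrict_iff' measurableSet_Ioc).2 (ae_of_all _ ?_))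
  rintro t ⟨ht1, ht2⟩
  have ht0 : 0 < t := one_pos.trans ht1
  rw [norm_of_nonneg (by unfold K0Integrand; positivity), rpow_neg (by linarith), ← sqrt_eq_rpow,
    ← div_eq_mul_inv]
  exact div_le_div₀ (by positivity)
    ((mul_le_of_le_one_left (by positivity) (exp_le_one_iff.2 (by nlinarith))).trans
      (pow_le_pow_left₀ ht0.le ht2 n))
    (sqrt_pos.2 (by linarith)) (sqrt_le_sqrt (by nlinarith))

lemma integrableOn_Ioi_two_K0Integrand (hr : 0 < r) : IntegrableOn (K0Integrand n r) (Ioi 2) := by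
  have hdom : IntegrableOn (fun t : ℝ => t ^ (n : ℝ) * exp (-r * t ^ (1 : ℝ))) (Ioi 2) :=
    (integrableOn_rpow_mul_exp_neg_mul_rpow (neg_one_lt_zero.trans_le n.cast_nonneg) one_pos
      hr).mono_set (Ioi_subset_Ioi zero_le_two)
  simp only [rpow_natCast, rpow_one] at hdom
  have hmeas : AEStronglyMeasurable (K0Integrand n r) (volume.restrict (Ioi 2)) :=
    ((continuousOn_K0Integrand n r).mono (Ioi_subset_Ioi one_le_two)).aestronglyMeasurable
      measurableSet_Ioi
  refine hdom.mono' hmeas ((ae_restrict_iff' measurableSet_Ioi).2 (ae_of_all _ fun t ht => ?_))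
  have ht : 2 < t := ht
  rw [norm_of_nonneg (by unfold K0Integrand; positivity), K0Integrand, mul_comm]
  exact div_le_self (by positivity) (one_le_sqrt.2 (by nlinarith))

lemma integrableOn_K0Integrand (hr : 0 < r) : IntegrableOn (K0Integrand n r) (Ioi 1) := by
  rw [← Ioc_union_Ioi_eq_Ioi one_le_two]
  exact (integrableOn_Ioc_K0Integrand n hr.le).union (integrableOn_Ioi_two_K0Integrand n hr)

end Integrability

lemma hasDerivAt_K0Integrand (n : ℕ) (r t : ℝ) :
    HasDerivAt (fun x => K0Integrand n x t) (-K0Integrand (n + 1) r t) r := by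
  have h : HasDerivAt (fun x => exp (-x * t)) (exp (-r * t) * -t) r := by
    simpa using ((hasDerivAt_id r).neg.mul_const t).exp
  have hfun : (fun x => K0Integrand n x t) = fun x => exp (-x * t) * (t ^ n / √(t ^ 2 - 1)) := by
    funext x; simp only [K0Integrand, mul_div_assoc]
  rw [hfun]
  exact (h.mul_const _).congr_deriv (by simp only [K0Integrand, pow_succ]; ring)

lemma hasDerivAt_K0Moment (n : ℕ) {r : ℝ} (hr : 0 < r) :
    HasDerivAt (K0Moment n) (-K0Moment (n + 1) r) r := by
  have hbound : ∀ᵐ t ∂volume.restrict (Ioi 1), ∀ x ∈ Metric.ball r (r / 2),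
      ‖-K0Integrand (n + 1) x t‖ ≤ K0Integrand (n + 1) (r / 2) t := by
    refine (ae_restrict_iff' measurableSet_Ioi).2 (ae_of_all _ fun t ht x hx => ?_)
    have ht : 1 < t := ht
    have hx : r / 2 < x := by linarith [(abs_lt.1 (mem_ball_iff_norm.1 hx)).1]
    rw [norm_neg, norm_of_nonneg (by unfold K0Integrand; positivity)]
    exact div_le_div_of_nonneg_right (mul_le_mul_of_nonneg_right
      (exp_le_exp.2 (by nlinarith)) (by positivity)) (sqrt_nonneg _)
  have h := hasDerivAt_integral_of_dominated_loc_of_deriv_le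
    (Metric.ball_mem_nhds r (half_pos hr))
    (.of_forall fun x => (continuousOn_K0Integrand n x).aestronglyMeasurable measurableSet_Ioi)
    (integrableOn_K0Integrand n hr)
    ((continuousOn_K0Integrand (n + 1) r).neg.aestronglyMeasurable measurableSet_Ioi)
    hbound (integrableOn_K0Integrand (n + 1) (half_pos hr))
    (ae_of_all _ fun t x _ => hasDerivAt_K0Integrand n x t)
  unfold K0Moment
  rw [← integral_neg]
  exact h.2

-- For `t² ≤ 1` both sides are `0`, since `√` vanishes on nonpositive numbers.
lemma exp_mul_sqrt_sq_sub_one_eq (r t : ℝ) :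
    exp (-r * t) * √(t ^ 2 - 1) = K0Integrand 2 r t - K0Integrand 0 r t := by
  rw [K0Integrand, K0Integrand, ← sub_div, pow_zero, mul_one, ← mul_sub_one, mul_div_assoc,
    div_sqrt]

lemma hasDerivAt_exp_mul_sqrt_sq_sub_one (r : ℝ) {t : ℝ} (ht : 1 < t) :
    HasDerivAt (fun x => exp (-r * x) * √(x ^ 2 - 1))
      (K0Integrand 1 r t - r * (K0Integrand 2 r t - K0Integrand 0 r t)) t := by
  have hexp : HasDerivAt (fun x => exp (-r * x)) (exp (-r * t) * -r) t := by
    simpa using ((hasDerivAt_id t).const_mul (-r)).exp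
  have hsqrt : HasDerivAt (fun x => √(x ^ 2 - 1)) (2 * t / (2 * √(t ^ 2 - 1))) t :=
    ((hasDerivAt_pow 2 t).sub_const 1).sqrt (by nlinarith) |>.congr_deriv (by norm_num)
  refine (hexp.mul hsqrt).congr_deriv ?_
  have := (sqrt_sq_sub_one_pos ht).ne'
  rw [← exp_mul_sqrt_sq_sub_one_eq, K0Integrand]
  field_simp
  ring

lemma tendsto_exp_mul_sqrt_sq_sub_one_atTop {r : ℝ} (hr : 0 < r) :
    Tendsto (fun t => exp (-r * t) * √(t ^ 2 - 1)) atTop (𝓝 0) := by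
  have hdecay := tendsto_rpow_mul_exp_neg_mul_atTop_nhds_zero 1 r hr
  simp only [rpow_one] at hdecay
  refine squeeze_zero' (.of_forall fun t => by positivity) ?_ hdecay
  filter_upwards [eventually_ge_atTop 0] with t ht
  rw [mul_comm]
  exact mul_le_mul_of_nonneg_right ((sqrt_le_sqrt (by linarith)).trans_eq (sqrt_sq ht))
    (exp_pos _).le

lemma K0Moment_one_eq {r : ℝ} (hr : 0 < r) :
    K0Moment 1 r = r * (K0Moment 2 r - K0Moment 0 r) := by
  have hint (n : ℕ) := integrableOn_K0Integrand n hr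
  have hint' : IntegrableOn (fun t => r * (K0Integrand 2 r t - K0Integrand 0 r t)) (Ioi 1) :=
    ((hint 2).sub (hint 0)).const_mul r
  have hibp := integral_Ioi_of_hasDerivAt_of_tendsto (by fun_prop)
    (fun t ht => hasDerivAt_exp_mul_sqrt_sq_sub_one r ht) ((hint 1).sub hint')
    (tendsto_exp_mul_sqrt_sq_sub_one_atTop hr)
  rw [integral_sub (hint 1) hint', integral_const_mul, integral_sub (hint 2) (hint 0)] at hibp
  norm_num at hibp
  simp only [K0Moment]
  linarith

/-- `K₀` is twice differentiable on `(0,∞)` and satisfies the modified Bessel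
equation of order zero: `K₀''(r) + (1/r)·K₀'(r) − K₀(r) = 0` for every `r > 0`. -/
theorem K0_twice_differentiable_and_bessel :
    ∀ r : ℝ, 0 < r →
      DifferentiableAt ℝ K0 r ∧ DifferentiableAt ℝ (deriv K0) r ∧
      deriv (deriv K0) r + (1 / r) * deriv K0 r - K0 r = 0 := by
  intro r hr
  have hK0 : HasDerivAt K0 (-K0Moment 1 r) r := K0_eq_K0Moment_zero ▸ hasDerivAt_K0Moment 0 hr
  have hK0' : deriv K0 =ᶠ[𝓝 r] fun x => -K0Moment 1 x := by
    filter_upwards [Ioi_mem_nhds hr] with x hx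
    rw [K0_eq_K0Moment_zero]
    exact (hasDerivAt_K0Moment 0 hx).deriv
  have hK0'' : HasDerivAt (deriv K0) (K0Moment 2 r) r := by
    simpa using (hasDerivAt_K0Moment 1 hr).neg.congr_of_eventuallyEq hK0'
  refine ⟨hK0.differentiableAt, hK0''.differentiableAt, ?_⟩
  rw [hK0''.deriv, hK0.deriv, K0_eq_K0Moment_zero, K0Moment_one_eq hr]
  field_simp
  ring
end

section
/- Up to scale, K₀ is the unique integrable solution of the modified Bessel equation of order zero: if F : (0,∞) → ℝ is twice continuously differentiable, satisfies F''(r) + (1/r)·F'(r) − F(r) = 0 for all r > 0, and the function r ↦ r·|F(r)| is integrable on (0,∞), then there exists a real constant b such that F(r) = b·K₀(r) for all r > 0. -/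
/-!
Differentiating under the integral sign gives `K₀' = -∫ t e^{-rt}/√(t²-1)` and
`K₀'' = ∫ t² e^{-rt}/√(t²-1)`, and integrating `d/dt (√(t²-1) e^{-rt})` over `(1, ∞)` shows that
`K₀` solves the modified Bessel equation. For another solution `F`, Abel's identity makes the
Wronskian `r (F' K₀ - F K₀')` a constant `c`, so `(F / K₀)' = c / (r K₀²)`. If `c > 0`, the bound
`K₀(r) ≤ e^{1-r} K₀(1)` makes `F / K₀` grow at least like `e^r`, while `r K₀(r) ≥ e^{-(r+1)} / 2`;
so `r F(r)` stays bounded away from `0` at infinity, contradicting integrability (`c < 0` is the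
same for `-F`). Hence `c = 0` and `F / K₀` is constant.
-/

open MeasureTheory

open Set Real Filter Topology
open scoped Nat

noncomputable def besselIntegrand (k : ℕ) (r t : ℝ) : ℝ :=
  t ^ k * exp (-r * t) / √(t ^ 2 - 1)

noncomputable def besselMoment (k : ℕ) (r : ℝ) : ℝ :=
  ∫ t in Ioi 1, besselIntegrand k r t

lemma besselMoment_zero : besselMoment 0 = K0 := by
  ext r
  simp [besselMoment, besselIntegrand, K0]

lemma measurable_besselIntegrand (k : ℕ) (r : ℝ) : Measurable (besselIntegrand k r) := by
  unfold besselIntegrand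
  fun_prop

lemma besselIntegrand_nonneg (k : ℕ) (r : ℝ) {t : ℝ} (ht : 0 ≤ t) : 0 ≤ besselIntegrand k r t := by
  unfold besselIntegrand
  positivity

lemma antitone_besselIntegrand (k : ℕ) {t : ℝ} (ht : 0 ≤ t) :
    Antitone fun r => besselIntegrand k r t := by
  intro x y hxy
  dsimp only [besselIntegrand]
  gcongr

lemma integrableOn_inv_sqrt_sq_sub_one :
    IntegrableOn (fun t : ℝ => (√(t ^ 2 - 1))⁻¹) (Ioc 1 2) := by
  have hdom : IntegrableOn (fun t : ℝ => (t - 1) ^ (-(1 / 2) : ℝ)) (Ioc 1 2) := by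
    rw [← intervalIntegrable_iff_integrableOn_Ioc_of_le one_le_two]
    have h := (intervalIntegral.intervalIntegrable_rpow' (a := 0) (b := 1)
      (r := -(1 / 2)) (by norm_num)).comp_sub_right 1
    norm_num at h ⊢
    exact h
  refine hdom.mono' (by fun_prop : Measurable _).aestronglyMeasurable
    ((ae_restrict_mem measurableSet_Ioc).mono fun t ht => ?_)
  obtain ⟨ht1, -⟩ := ht
  rw [norm_inv, Real.norm_of_nonneg (Real.sqrt_nonneg _), Real.rpow_neg (by linarith),
    ← Real.sqrt_eq_rpow]
  exact inv_anti₀ (Real.sqrt_pos.2 (by linarith)) (Real.sqrt_le_sqrt (by nlinarith))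

lemma integrableOn_exp_neg_mul_div_sqrt {a : ℝ} (ha : 0 < a) :
    IntegrableOn (fun t => exp (-a * t) / √(t ^ 2 - 1)) (Ioi 1) := by
  have hmeas : AEStronglyMeasurable (fun t => exp (-a * t) / √(t ^ 2 - 1)) :=
    (by fun_prop : Measurable _).aestronglyMeasurable
  rw [← Ioc_union_Ioi_eq_Ioi one_le_two]
  refine IntegrableOn.union ?_ ?_
  · refine integrableOn_inv_sqrt_sq_sub_one.mono' hmeas.restrict
      ((ae_restrict_mem measurableSet_Ioc).mono fun t ht => ?_)
    rw [Real.norm_of_nonneg (by positivity), div_eq_mul_inv]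
    refine mul_le_of_le_one_left (by positivity) (exp_le_one_iff.2 ?_)
    nlinarith [ht.1]
  · refine (exp_neg_integrableOn_Ioi 2 ha).mono' hmeas.restrict
      ((ae_restrict_mem measurableSet_Ioi).mono fun t ht => ?_)
    have hs : 1 ≤ √(t ^ 2 - 1) := Real.one_le_sqrt.2 (by nlinarith [mem_Ioi.1 ht])
    rw [Real.norm_of_nonneg (by positivity), neg_mul]
    exact div_le_self (exp_nonneg _) hs

lemma pow_le_factorial_mul_exp (k : ℕ) {r t : ℝ} (hr : 0 < r) (ht : 0 ≤ t) :
    t ^ k ≤ k ! * (2 / r) ^ k * exp (r / 2 * t) := by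
  have h := pow_div_factorial_le_exp (x := r / 2 * t) (by positivity) k
  rw [div_le_iff₀ (by positivity)] at h
  calc t ^ k = (2 / r) ^ k * (r / 2 * t) ^ k := by rw [← mul_pow]; field_simp
    _ ≤ (2 / r) ^ k * (exp (r / 2 * t) * k !) := by gcongr
    _ = k ! * (2 / r) ^ k * exp (r / 2 * t) := by ring

lemma integrableOn_besselIntegrand (k : ℕ) {r : ℝ} (hr : 0 < r) :
    IntegrableOn (besselIntegrand k r) (Ioi 1) := by
  refine ((integrableOn_exp_neg_mul_div_sqrt (half_pos hr)).const_mul (k ! * (2 / r) ^ k)).mono'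
    (measurable_besselIntegrand k r).aestronglyMeasurable
    ((ae_restrict_mem measurableSet_Ioi).mono fun t ht => ?_)
  have ht0 : 0 ≤ t := zero_le_one.trans (le_of_lt ht)
  rw [Real.norm_of_nonneg (besselIntegrand_nonneg k r ht0), besselIntegrand, ← mul_div_assoc]
  refine div_le_div_of_nonneg_right ?_ (sqrt_nonneg _)
  calc t ^ k * exp (-r * t) ≤ k ! * (2 / r) ^ k * exp (r / 2 * t) * exp (-r * t) := by
        gcongr; exact pow_le_factorial_mul_exp k hr ht0
    _ = k ! * (2 / r) ^ k * exp (-(r / 2) * t) := by rw [mul_assoc, ← exp_add]; ring_nf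

lemma hasDerivAt_besselMoment (k : ℕ) {r : ℝ} (hr : 0 < r) :
    HasDerivAt (besselMoment k) (-besselMoment (k + 1) r) r := by
  have hball : Metric.ball r (r / 2) ∈ 𝓝 r := Metric.ball_mem_nhds r (half_pos hr)
  have hbound : ∀ᵐ t ∂volume.restrict (Ioi 1), ∀ x ∈ Metric.ball r (r / 2),
      ‖-besselIntegrand (k + 1) x t‖ ≤ besselIntegrand (k + 1) (r / 2) t := by
    filter_upwards [ae_restrict_mem measurableSet_Ioi] with t ht x hx
    have ht0 : 0 ≤ t := zero_le_one.trans (le_of_lt ht)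
    have hx : r / 2 ≤ x := by
      rw [Metric.mem_ball, Real.dist_eq, abs_lt] at hx
      linarith [hx.1]
    rw [norm_neg, Real.norm_of_nonneg (besselIntegrand_nonneg _ _ ht0)]
    exact antitone_besselIntegrand (k + 1) ht0 hx
  have hderiv : ∀ᵐ t ∂volume.restrict (Ioi 1), ∀ x ∈ Metric.ball r (r / 2),
      HasDerivAt (besselIntegrand k · t) (-besselIntegrand (k + 1) x t) x := by
    refine Eventually.of_forall fun t x _ => ?_
    have h := (((hasDerivAt_neg x).mul_const t).exp.const_mul (t ^ k)).div_const √(t ^ 2 - 1)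
    refine h.congr_deriv ?_
    simp only [besselIntegrand]
    ring
  have h := hasDerivAt_integral_of_dominated_loc_of_deriv_le hball
    (Eventually.of_forall fun x => (measurable_besselIntegrand k x).aestronglyMeasurable)
    (integrableOn_besselIntegrand k hr)
    (measurable_besselIntegrand (k + 1) r).aestronglyMeasurable.neg
    hbound (integrableOn_besselIntegrand (k + 1) (half_pos hr)) hderiv
  rw [besselMoment, ← integral_neg]
  exact h.2

lemma hasDerivAt_sqrt_sq_sub_one_mul_exp (r : ℝ) {t : ℝ} (ht : 1 < t) :
    HasDerivAt (fun t => √(t ^ 2 - 1) * exp (-r * t))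
      (besselIntegrand 1 r t - r * (besselIntegrand 2 r t - besselIntegrand 0 r t)) t := by
  have hpos : 0 < t ^ 2 - 1 := by nlinarith
  have hsq := Real.sq_sqrt hpos.le
  have h := (((hasDerivAt_pow 2 t).sub_const 1).sqrt hpos.ne').mul
    ((hasDerivAt_id t).const_mul (-r)).exp
  refine h.congr_deriv ?_
  simp only [besselIntegrand, id, Nat.cast_ofNat, pow_one, pow_zero, one_mul, mul_one]
  norm_num
  field_simp
  rw [hsq]
  ring

lemma besselMoment_one_eq {r : ℝ} (hr : 0 < r) :
    besselMoment 1 r = r * (besselMoment 2 r - besselMoment 0 r) := by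
  have hint : IntegrableOn (fun t => r * (besselIntegrand 2 r t - besselIntegrand 0 r t)) (Ioi 1) :=
    ((integrableOn_besselIntegrand 2 hr).sub (integrableOn_besselIntegrand 0 hr)).const_mul r
  have hlim : Tendsto (fun t => √(t ^ 2 - 1) * exp (-r * t)) atTop (𝓝 0) := by
    refine squeeze_zero' (Eventually.of_forall fun t => by positivity) ?_
      (by simpa using tendsto_rpow_mul_exp_neg_mul_atTop_nhds_zero 1 r hr)
    filter_upwards [eventually_ge_atTop 0] with t ht
    rw [← neg_mul]
    gcongr
    exact (Real.sqrt_le_left ht).2 (by linarith)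
  have h := integral_Ioi_of_hasDerivAt_of_tendsto (by fun_prop)
    (fun t ht => hasDerivAt_sqrt_sq_sub_one_mul_exp r ht)
    ((integrableOn_besselIntegrand 1 hr).sub hint) hlim
  rw [integral_sub (integrableOn_besselIntegrand 1 hr) hint, integral_const_mul,
    integral_sub (integrableOn_besselIntegrand 2 hr) (integrableOn_besselIntegrand 0 hr)] at h
  simp only [besselMoment]
  norm_num at h
  linarith

lemma hasDerivAt_K0 {r : ℝ} (hr : 0 < r) : HasDerivAt K0 (-besselMoment 1 r) r :=
  besselMoment_zero ▸ hasDerivAt_besselMoment 0 hr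

lemma hasDerivAt_neg_besselMoment_one {r : ℝ} (hr : 0 < r) :
    HasDerivAt (fun r => -besselMoment 1 r) (besselMoment 2 r) r :=
  (hasDerivAt_besselMoment 1 hr).neg.congr_deriv (neg_neg _)

lemma K0_bessel_ode {r : ℝ} (hr : 0 < r) :
    besselMoment 2 r + 1 / r * -besselMoment 1 r - K0 r = 0 := by
  rw [besselMoment_one_eq hr, ← besselMoment_zero]
  field_simp
  ring

lemma le_K0 {r s : ℝ} (hr : 0 < r) (hs : 1 < s) (hs2 : s ≤ 2) :
    (s - 1) * exp (-r * s) / 2 ≤ K0 r := by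
  have hint : IntegrableOn (besselIntegrand 0 r) (Ioi 1) := integrableOn_besselIntegrand 0 hr
  calc (s - 1) * exp (-r * s) / 2 = ∫ _ in Ioc 1 s, exp (-r * s) / 2 := by
        rw [setIntegral_const, Real.volume_real_Ioc_of_le hs.le, smul_eq_mul, mul_div_assoc]
    _ ≤ ∫ t in Ioc 1 s, besselIntegrand 0 r t := by
        refine setIntegral_mono_on (integrableOn_const (by simp))
          (hint.mono_set Ioc_subset_Ioi_self) measurableSet_Ioc fun t ⟨ht1, hts⟩ => ?_
        rw [besselIntegrand, pow_zero, one_mul]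
        exact div_le_div₀ (exp_nonneg _) (exp_le_exp.2 (by nlinarith))
          (Real.sqrt_pos.2 (by nlinarith)) ((Real.sqrt_le_left zero_le_two).2 (by nlinarith))
    _ ≤ ∫ t in Ioi 1, besselIntegrand 0 r t :=
        setIntegral_mono_set hint
          ((ae_restrict_mem measurableSet_Ioi).mono fun t ht =>
            besselIntegrand_nonneg 0 r (zero_le_one.trans (le_of_lt ht)))
          Ioc_subset_Ioi_self.eventuallyLE
    _ = K0 r := by rw [← besselMoment_zero]; rfl

lemma K0_pos {r : ℝ} (hr : 0 < r) : 0 < K0 r :=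
  lt_of_lt_of_le (by positivity) (le_K0 hr one_lt_two le_rfl)

lemma exp_neg_le_mul_K0 {r : ℝ} (hr : 1 ≤ r) : exp (-(r + 1)) / 2 ≤ r * K0 r := by
  have hr0 : 0 < r := zero_lt_one.trans_le hr
  have h := le_K0 hr0 (s := 1 + 1 / r) (lt_add_of_pos_right 1 (one_div_pos.2 hr0))
    (by rw [one_div]; linarith [inv_le_one_of_one_le₀ hr])
  have he : -r * (1 + 1 / r) = -(r + 1) := by field_simp
  rw [add_sub_cancel_left, he] at h
  calc exp (-(r + 1)) / 2 = r * (1 / r * exp (-(r + 1)) / 2) := by field_simp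
    _ ≤ r * K0 r := by gcongr

lemma K0_le_exp_one_sub_mul {r : ℝ} (hr : 1 ≤ r) : K0 r ≤ exp (1 - r) * K0 1 := by
  simp only [← besselMoment_zero, besselMoment]
  rw [← integral_const_mul]
  refine setIntegral_mono_on (integrableOn_besselIntegrand 0 (by linarith))
    ((integrableOn_besselIntegrand 0 one_pos).const_mul _) measurableSet_Ioi fun t ht => ?_
  simp only [besselIntegrand, pow_zero, one_mul, mul_div_assoc', ← exp_add]
  gcongr
  nlinarith [mem_Ioi.1 ht]

theorem exists_mul_wronskian_eq_of_bessel_ode {F F' F'' G G' G'' : ℝ → ℝ}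
    (hF' : ∀ r, 0 < r → HasDerivAt F (F' r) r) (hF'' : ∀ r, 0 < r → HasDerivAt F' (F'' r) r)
    (hF : ∀ r, 0 < r → F'' r + 1 / r * F' r - F r = 0)
    (hG' : ∀ r, 0 < r → HasDerivAt G (G' r) r) (hG'' : ∀ r, 0 < r → HasDerivAt G' (G'' r) r)
    (hG : ∀ r, 0 < r → G'' r + 1 / r * G' r - G r = 0) :
    ∃ c, ∀ r, 0 < r → r * (F' r * G r - F r * G' r) = c := by
  have hW : ∀ r ∈ Ioi (0 : ℝ), HasDerivAt (fun r => r * (F' r * G r - F r * G' r)) 0 r := by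
    intro r hr
    have h := (hasDerivAt_id r).mul (((hF'' r hr).mul (hG' r hr)).sub ((hF' r hr).mul (hG'' r hr)))
    refine h.congr_deriv ?_
    have hr0 : r ≠ 0 := ne_of_gt hr
    simp only [Pi.mul_apply, Pi.sub_apply, id]
    linear_combination (norm := skip) (r * G r) * hF r hr - (r * F r) * hG r hr
    field_simp
    ring
  exact isOpen_Ioi.exists_is_const_of_deriv_eq_zero isPreconnected_Ioi
    (fun r hr => (hW r hr).differentiableAt.differentiableWithinAt) fun r hr => (hW r hr).deriv

lemma not_integrableOn_Ioi_of_eventually_le {f : ℝ → ℝ} {ε : ℝ} (hε : 0 < ε)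
    (hf : ∀ᶠ x in atTop, ε ≤ f x) (a : ℝ) : ¬ IntegrableOn f (Ioi a) := by
  intro hint
  obtain ⟨R, hR⟩ := eventually_atTop.1 hf
  have hconst : IntegrableOn (fun _ => ε) (Ioi (max a R)) :=
    (hint.mono_set (Ioi_subset_Ioi (le_max_left a R))).mono' aestronglyMeasurable_const
      ((ae_restrict_mem measurableSet_Ioi).mono fun x hx => by
        rw [Real.norm_of_nonneg hε.le]
        exact hR x ((le_max_right a R).trans (le_of_lt hx)))
  simp [integrableOn_const_iff, hε.ne'] at hconst

lemma not_integrableOn_mul_K0_of_hasDerivAt {g : ℝ → ℝ} {c : ℝ} (hc : 0 < c)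
    (hg : ∀ r, 0 < r → HasDerivAt g (c / (r * K0 r ^ 2)) r) :
    ¬ IntegrableOn (fun r => r * |g r * K0 r|) (Ioi 0) := by
  set κ := c / (exp 1 * K0 1) ^ 2
  have hK1 := K0_pos one_pos
  have hκ : 0 < κ := by positivity
  have hderiv : ∀ r, 1 ≤ r → κ * exp r ≤ c / (r * K0 r ^ 2) := by
    intro r hr
    have hKr := K0_pos (zero_lt_one.trans_le hr)
    have hexp : exp r * exp r * exp (1 - r) ^ 2 = exp 1 ^ 2 := by
      simp only [sq, ← exp_add]
      ring_nf
    rw [le_div_iff₀ (by positivity)]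
    calc κ * exp r * (r * K0 r ^ 2) ≤ κ * exp r * (exp r * (exp (1 - r) * K0 1) ^ 2) := by
          gcongr
          · linarith [add_one_le_exp r]
          · exact K0_le_exp_one_sub_mul hr
      _ = κ * (exp r * exp r * exp (1 - r) ^ 2) * K0 1 ^ 2 := by ring
      _ = c := by
          rw [hexp]
          simp only [κ]
          field_simp
  have hgrow : ∀ r, 1 ≤ r → g 1 + κ * (exp r - exp 1) ≤ g r := by
    have hmono : MonotoneOn (fun r => g r - κ * exp r) (Ici 1) := by
      refine monotoneOn_of_hasDerivWithinAt_nonneg (f' := fun r => c / (r * K0 r ^ 2) - κ * exp r)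
        (convex_Ici 1)
        (fun r hr => ((hg r (zero_lt_one.trans_le hr)).continuousAt.sub
          (by fun_prop)).continuousWithinAt) (fun r hr => ?_) fun r hr => ?_
      · rw [interior_Ici] at hr ⊢
        exact ((hg r (zero_lt_one.trans hr)).sub ((hasDerivAt_exp r).const_mul κ)).hasDerivWithinAt
      · rw [interior_Ici] at hr
        exact sub_nonneg.2 (hderiv r (le_of_lt hr))
    intro r hr
    have := hmono self_mem_Ici hr hr
    linarith
  have hlarge : ∀ᶠ r in atTop, κ * exp r / 2 ≤ g r := by
    filter_upwards [eventually_ge_atTop 1,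
      tendsto_exp_atTop.eventually_ge_atTop (2 * (κ * exp 1 - g 1) / κ)] with r hr hexp
    rw [div_le_iff₀ hκ] at hexp
    linarith [hgrow r hr]
  refine not_integrableOn_Ioi_of_eventually_le (ε := κ * exp (-1) / 4) (by positivity) ?_ 0
  filter_upwards [eventually_ge_atTop 1, hlarge] with r hr hgr
  calc κ * exp (-1) / 4 = κ * exp r / 2 * (exp (-(r + 1)) / 2) := by
        rw [show -(r + 1) = -1 - r by ring, exp_sub]
        field_simp
        norm_num
    _ ≤ g r * (r * K0 r) :=
        mul_le_mul hgr (exp_neg_le_mul_K0 hr) (by positivity) (hgr.trans' (by positivity))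
    _ = r * (g r * K0 r) := by ring
    _ ≤ r * |g r * K0 r| := by gcongr; exact le_abs_self _

lemma eq_zero_of_integrableOn_mul_K0 {g : ℝ → ℝ} {c : ℝ}
    (hg : ∀ r, 0 < r → HasDerivAt g (c / (r * K0 r ^ 2)) r)
    (hint : IntegrableOn (fun r => r * |g r * K0 r|) (Ioi 0)) : c = 0 := by
  rcases lt_trichotomy c 0 with hc | hc | hc
  · refine absurd ?_ (not_integrableOn_mul_K0_of_hasDerivAt (neg_pos.2 hc) (g := -g)
      fun r hr => (hg r hr).neg.congr_deriv (neg_div _ _).symm)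
    simpa only [Pi.neg_apply, neg_mul, abs_neg] using hint
  · exact hc
  · exact absurd hint (not_integrableOn_mul_K0_of_hasDerivAt hc hg)

theorem bessel_integrable_solution_is_K0_general
    (F F' F'' : ℝ → ℝ)
    (hF' : ∀ r : ℝ, 0 < r → HasDerivAt F (F' r) r)
    (hF'' : ∀ r : ℝ, 0 < r → HasDerivAt F' (F'' r) r)
    (hode : ∀ r : ℝ, 0 < r → F'' r + (1 / r) * F' r - F r = 0)
    (hint : IntegrableOn (fun r : ℝ => r * |F r|) (Set.Ioi 0)) :
    ∃ b : ℝ, ∀ r : ℝ, 0 < r → F r = b * K0 r := by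
  obtain ⟨c, hc⟩ := exists_mul_wronskian_eq_of_bessel_ode hF' hF'' hode
    (fun _ => hasDerivAt_K0) (fun _ => hasDerivAt_neg_besselMoment_one) fun _ => K0_bessel_ode
  have hFK : ∀ r, 0 < r → F r / K0 r * K0 r = F r := fun r hr =>
    div_mul_cancel₀ _ (K0_pos hr).ne'
  have hg : ∀ r, 0 < r → HasDerivAt (fun r => F r / K0 r) (c / (r * K0 r ^ 2)) r :=
    fun r hr => ((hF' r hr).div (hasDerivAt_K0 hr) (K0_pos hr).ne').congr_deriv (by
      rw [← hc r hr]; field_simp)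
  have hc0 : c = 0 := eq_zero_of_integrableOn_mul_K0 hg
    (hint.congr_fun (fun r hr => by rw [hFK r hr]) measurableSet_Ioi)
  refine ⟨F 1 / K0 1, fun r hr => ?_⟩
  have hconst : F r / K0 r = F 1 / K0 1 :=
    isOpen_Ioi.is_const_of_deriv_eq_zero isPreconnected_Ioi
      (fun x hx => (hg x hx).differentiableAt.differentiableWithinAt)
      (fun x hx => by simpa [hc0] using (hg x hx).deriv) hr (mem_Ioi.2 one_pos)
  rw [← hconst, hFK r hr]

/-- Up to scale, `K₀` is the unique solution of the modified Bessel equation of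
order zero for which `r ↦ r·|F(r)|` is integrable on `(0,∞)`. -/
theorem bessel_integrable_solution_is_K0
    (F F' F'' : ℝ → ℝ)
    (hF' : ∀ r : ℝ, 0 < r → HasDerivAt F (F' r) r)
    (hF'' : ∀ r : ℝ, 0 < r → HasDerivAt F' (F'' r) r)
    (hcont : ContinuousOn F'' (Set.Ioi 0))
    (hode : ∀ r : ℝ, 0 < r → F'' r + (1 / r) * F' r - F r = 0)
    (hint : IntegrableOn (fun r : ℝ => r * |F r|) (Set.Ioi 0)) :
    ∃ b : ℝ, ∀ r : ℝ, 0 < r → F r = b * K0 r :=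
  bessel_integrable_solution_is_K0_general F F' F'' hF' hF'' hode hint
end

section
/- The radially symmetric function x ↦ K₀(|x|) is integrable on ℝ² with respect to Lebesgue measure, and ∫_{ℝ²} K₀(|x|) dx = 2π; equivalently, the function r ↦ r·K₀(r) is integrable on (0,∞) and ∫₀^∞ r·K₀(r) dr = 1. -/
open MeasureTheory Real

/-- The Euclidean norm on `ℝ²` (realized as `ℝ × ℝ`). -/
noncomputable def eNorm2 (p : ℝ × ℝ) : ℝ :=
  Real.sqrt (p.1 ^ 2 + p.2 ^ 2)

/-!
Exchanging the order of integration in the definition of `K₀` (legitimate since the integrand is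
nonnegative and the iterated integral below is finite),
`∫₀^∞ r K₀(r) dr = ∫₁^∞ (t² - 1)^{-1/2} ∫₀^∞ r e^{-rt} dr dt = ∫₁^∞ dt / (t² √(t² - 1)) = 1`,
where `√(t² - 1) / t` is an antiderivative of the last integrand. Polar coordinates turn the
integral of `K₀(|x|)` over the plane into `2π ∫₀^∞ r K₀(r) dr`.
-/

open Set Filter Topology

lemma eNorm2_polarCoord_symm (p : ℝ × ℝ) : eNorm2 (polarCoord.symm p) = |p.1| := by
  rw [eNorm2, polarCoord_symm_apply, ← sqrt_sq_eq_abs]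
  congr 1
  linear_combination p.1 ^ 2 * cos_sq_add_sin_sq p.2

section Radial

variable {E : Type*} [NormedAddCommGroup E] [NormedSpace ℝ E]

lemma integrable_comp_eNorm2 {g : ℝ → E} (hg : IntegrableOn (fun r => r • g r) (Ioi 0)) :
    Integrable (fun x => g (eNorm2 x)) := by
  have hsource : IntegrableOn (fun x => g (eNorm2 x)) polarCoord.source := by
    rw [← polarCoord.symm_image_target_eq_source,
      integrableOn_image_iff_integrableOn_abs_det_fderiv_smul volume
        polarCoord.open_target.measurableSet
        (fun p _ => (hasFDerivAt_polarCoord_symm p).hasFDerivWithinAt) polarCoord.symm.injOn,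
      polarCoord_target, IntegrableOn, Measure.volume_eq_prod, ← Measure.prod_restrict]
    refine (hg.comp_fst (volume.restrict (Ioo (-π) π))).congr ?_
    rw [Measure.prod_restrict]
    filter_upwards [ae_restrict_mem (measurableSet_Ioi.prod measurableSet_Ioo)] with p hp
    have hp : 0 < p.1 := hp.1
    simp only [det_fderivPolarCoordSymm, eNorm2_polarCoord_symm, abs_of_pos hp]
  rwa [← integrableOn_univ, integrableOn_congr_set_ae polarCoord_source_ae_eq_univ.symm]

lemma integral_comp_eNorm2 (g : ℝ → E) :
    ∫ x, g (eNorm2 x) = (2 * π) • ∫ r in Ioi 0, r • g r := by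
  rw [← integral_comp_polarCoord_symm, polarCoord_target, Measure.volume_eq_prod,
    setIntegral_congr_fun (measurableSet_Ioi.prod measurableSet_Ioo)
      (g := fun p => p.1 • g p.1)
      (fun p hp => by rw [eNorm2_polarCoord_symm, abs_of_pos (show 0 < p.1 from hp.1)]),
    ← Measure.prod_restrict, integral_fun_fst (fun r => r • g r)]
  simp [two_mul, pi_pos.le]

end Radial

lemma integrableOn_mul_exp_neg_mul {t : ℝ} (ht : 0 < t) :
    IntegrableOn (fun r : ℝ => r * exp (-r * t)) (Ioi 0) := by
  simpa [mul_comm t] using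
    integrableOn_rpow_mul_exp_neg_mul_rpow (s := 1) (p := 1) (by norm_num) one_pos ht

lemma integral_mul_exp_neg_mul {t : ℝ} (ht : 0 < t) :
    ∫ r in Ioi 0, r * exp (-r * t) = 1 / t ^ 2 := by
  have := integral_rpow_mul_exp_neg_mul_Ioi two_pos ht
  norm_num [mul_comm t] at this
  simpa [neg_mul, mul_comm _ t] using this

lemma hasDerivAt_sqrt_sq_sub_one_div {t : ℝ} (ht : 1 < t) :
    HasDerivAt (fun t => √(t ^ 2 - 1) / t) (1 / (t ^ 2 * √(t ^ 2 - 1))) t := by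
  have hpos : 0 < t ^ 2 - 1 := by nlinarith
  refine ((((hasDerivAt_pow 2 t).sub_const 1).sqrt hpos.ne').fun_div (hasDerivAt_id' t)
    (by positivity)).congr_deriv ?_
  have hs : √(t ^ 2 - 1) ≠ 0 := (sqrt_pos.mpr hpos).ne'
  field_simp
  rw [sq_sqrt hpos.le]
  norm_num
  ring

lemma tendsto_sqrt_sq_sub_one_div_atTop :
    Tendsto (fun t => √(t ^ 2 - 1) / t) atTop (𝓝 1) := by
  have hlim : Tendsto (fun t : ℝ => √(1 - t⁻¹ ^ 2)) atTop (𝓝 1) := by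
    simpa using ((tendsto_inv_atTop_zero.pow 2).const_sub 1).sqrt
  refine hlim.congr' ?_
  filter_upwards [eventually_gt_atTop 1] with t ht
  rw [show 1 - t⁻¹ ^ 2 = (t ^ 2 - 1) / t ^ 2 by field_simp, sqrt_div (by nlinarith),
    sqrt_sq (by linarith)]

lemma integrableOn_inv_sq_mul_sqrt_sq_sub_one :
    IntegrableOn (fun t => 1 / (t ^ 2 * √(t ^ 2 - 1))) (Ioi 1) :=
  integrableOn_Ioi_deriv_of_nonneg (by fun_prop (disch := norm_num))
    (fun _ ht => hasDerivAt_sqrt_sq_sub_one_div ht) (fun _ _ => by positivity)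
    tendsto_sqrt_sq_sub_one_div_atTop

lemma integral_inv_sq_mul_sqrt_sq_sub_one :
    ∫ t in Ioi 1, 1 / (t ^ 2 * √(t ^ 2 - 1)) = 1 := by
  rw [integral_Ioi_of_hasDerivAt_of_nonneg (by fun_prop (disch := norm_num))
    (fun _ ht => hasDerivAt_sqrt_sq_sub_one_div ht) (fun _ _ => by positivity)
    tendsto_sqrt_sq_sub_one_div_atTop]
  norm_num

lemma integral_mul_exp_neg_mul_div_sqrt {t : ℝ} (ht : 0 < t) :
    ∫ r in Ioi 0, r * (exp (-r * t) / √(t ^ 2 - 1)) = 1 / (t ^ 2 * √(t ^ 2 - 1)) := by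
  simp_rw [mul_div_assoc']
  rw [integral_div, integral_mul_exp_neg_mul ht, div_div]

lemma integrable_mul_K0_integrand :
    Integrable (fun p : ℝ × ℝ => p.1 * (exp (-p.1 * p.2) / √(p.2 ^ 2 - 1)))
      ((volume.restrict (Ioi 0)).prod (volume.restrict (Ioi 1))) := by
  rw [integrable_prod_iff' (by fun_prop : Measurable _).aestronglyMeasurable]
  constructor
  · filter_upwards [ae_restrict_mem measurableSet_Ioi] with t ht
    simp_rw [mul_div_assoc']
    exact (integrableOn_mul_exp_neg_mul (zero_lt_one.trans ht)).div_const _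
  · refine integrableOn_inv_sq_mul_sqrt_sq_sub_one.congr_fun (fun t ht => ?_) measurableSet_Ioi
    have ht : 0 < t := zero_lt_one.trans ht
    dsimp only
    rw [← integral_mul_exp_neg_mul_div_sqrt ht]
    refine setIntegral_congr_fun measurableSet_Ioi (fun r hr => ?_)
    have hr : 0 < r := hr
    exact (norm_of_nonneg (by positivity)).symm

lemma integrableOn_mul_K0 : IntegrableOn (fun r => r * K0 r) (Ioi 0) := by
  simpa only [IntegrableOn, K0, integral_const_mul] using
    integrable_mul_K0_integrand.integral_prod_left

lemma integral_mul_K0 : ∫ r in Ioi 0, r * K0 r = 1 := by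
  simp_rw [K0, ← integral_const_mul]
  rw [integral_integral_swap integrable_mul_K0_integrand,
    setIntegral_congr_fun measurableSet_Ioi
      (fun t ht => integral_mul_exp_neg_mul_div_sqrt (zero_lt_one.trans ht)),
    integral_inv_sq_mul_sqrt_sq_sub_one]

/-- `x ↦ K₀(|x|)` is integrable on `ℝ²` with integral `2π`; equivalently,
`r ↦ r·K₀(r)` is integrable on `(0,∞)` with integral `1`. -/
theorem K0_integral_on_plane :
    Integrable (fun x : ℝ × ℝ => K0 (eNorm2 x)) volume ∧
    (∫ x : ℝ × ℝ, K0 (eNorm2 x)) = 2 * π ∧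
    IntegrableOn (fun r : ℝ => r * K0 r) (Set.Ioi 0) volume ∧
    (∫ r in Set.Ioi (0 : ℝ), r * K0 r) = 1 := by
  refine ⟨integrable_comp_eNorm2 integrableOn_mul_K0, ?_, integrableOn_mul_K0, integral_mul_K0⟩
  rw [integral_comp_eNorm2]
  simp only [smul_eq_mul, integral_mul_K0, mul_one]
end

section
/- The second term of the asymptotic expansion of K₀ at infinity has coefficient −1/8; precisely, lim_{r→∞} r·( √(2r/π)·e^{r}·K₀(r) − 1 ) = −1/8. -/
open Filter Real

/-!
The substitution `t = 1 + s / r` turns `√(2r/π) e^r K₀(r)` into the average of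
`(1 + s/(2r))^(-1/2)` against the density `e^(-s) / √(π s)` of the Gamma(1/2) law.
Since `(1 + x)^(-1/2) - 1 = -x / (√(1+x) (1 + √(1+x)))`, the quantity
`r ((1 + s/(2r))^(-1/2) - 1)` tends to `-s/4` and is bounded by `s/4`, so by dominated
convergence the limit is `-1/4` times the mean `Γ(3/2)/√π = 1/2` of that law.
-/

open MeasureTheory Set Topology

theorem setIntegral_Ioi_eq_inv_mul_setIntegral_Ioi_zero {E : Type*} [NormedAddCommGroup E]
    [NormedSpace ℝ E] (g : ℝ → E) (a : ℝ) {c : ℝ} (hc : 0 < c) :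
    ∫ t in Ioi a, g t = c⁻¹ • ∫ s in Ioi 0, g (a + s / c) := by
  have himage : (fun s => a + s / c) '' Ioi 0 = Ioi a := by
    ext t
    refine ⟨?_, fun ht => ⟨(t - a) * c, ?_, by field_simp; ring⟩⟩
    · rintro ⟨s, hs, rfl⟩
      simp only [mem_Ioi] at hs ⊢
      have : 0 < s / c := div_pos hs hc
      linarith
    · simp only [mem_Ioi] at ht ⊢
      nlinarith
  have hderiv : ∀ s ∈ Ioi (0 : ℝ), HasDerivWithinAt (fun s => a + s / c) c⁻¹ (Ioi 0) s :=
    fun s _ => by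
      simpa [div_eq_mul_inv] using ((hasDerivAt_mul_const c⁻¹).const_add a).hasDerivWithinAt
  have hinj : InjOn (fun s => a + s / c) (Ioi 0) := fun s _ t _ h => by
    simpa [hc.ne'] using h
  rw [← himage, integral_image_eq_integral_abs_deriv_smul measurableSet_Ioi hderiv hinj,
    abs_of_pos (inv_pos.mpr hc), integral_smul]

theorem inv_sqrt_one_add_sub_one {x : ℝ} (hx : -1 < x) :
    (√(1 + x))⁻¹ - 1 = -x / (√(1 + x) * (1 + √(1 + x))) := by
  have hpos : 0 < √(1 + x) := sqrt_pos.mpr (by linarith)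
  have hsq : √(1 + x) ^ 2 = 1 + x := sq_sqrt (by linarith)
  field_simp
  linear_combination -hsq

theorem abs_inv_sqrt_one_add_sub_one_le {x : ℝ} (hx : 0 ≤ x) :
    |(√(1 + x))⁻¹ - 1| ≤ x / 2 := by
  have hone : 1 ≤ √(1 + x) := one_le_sqrt.mpr (by linarith)
  rw [inv_sqrt_one_add_sub_one (by linarith), abs_div, abs_neg, abs_of_nonneg hx,
    abs_of_pos (by positivity)]
  gcongr
  nlinarith

theorem tendsto_mul_inv_sqrt_one_add_div_sub_one (s : ℝ) :
    Tendsto (fun r => r * ((√(1 + s / (2 * r)))⁻¹ - 1)) atTop (𝓝 (-s / 4)) := by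
  have hx : Tendsto (fun r : ℝ => s / (2 * r)) atTop (𝓝 0) :=
    tendsto_const_nhds.div_atTop (tendsto_id.const_mul_atTop two_pos)
  have hcont : ContinuousAt (fun x : ℝ => -(s / 2) / (√(1 + x) * (1 + √(1 + x)))) 0 :=
    continuousAt_const.div (by fun_prop) (by norm_num)
  have hlim := hcont.tendsto.comp hx
  rw [show -(s / 2) / (√(1 + 0) * (1 + √(1 + 0))) = -s / 4 by norm_num; ring] at hlim
  refine hlim.congr' ?_
  filter_upwards [eventually_gt_atTop 0, hx.eventually (Ioi_mem_nhds neg_one_lt_zero)]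
    with r hr hxr
  rw [Function.comp_apply, inv_sqrt_one_add_sub_one hxr]
  field_simp

noncomputable def halfGammaDensity (s : ℝ) : ℝ := exp (-s) / √(π * s)

theorem halfGammaDensity_mul_rpow {s : ℝ} (hs : 0 < s) (a : ℝ) :
    halfGammaDensity s * s ^ a = (√π)⁻¹ * (exp (-s) * s ^ (a + 1 / 2 - 1)) := by
  rw [halfGammaDensity, sqrt_mul pi_pos.le, rpow_sub hs, rpow_add hs, rpow_one, ← sqrt_eq_rpow]
  have hsqrt : 0 < √s := sqrt_pos.mpr hs
  field_simp
  rw [sq_sqrt hs.le]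

theorem integrableOn_halfGammaDensity_mul_rpow {a : ℝ} (ha : -(1 / 2) < a) :
    IntegrableOn (fun s => halfGammaDensity s * s ^ a) (Ioi 0) :=
  IntegrableOn.congr_fun ((GammaIntegral_convergent (by linarith : 0 < a + 1 / 2)).const_mul _)
    (fun _ hs => (halfGammaDensity_mul_rpow hs a).symm) measurableSet_Ioi

theorem integral_halfGammaDensity_mul_rpow {a : ℝ} (ha : -(1 / 2) < a) :
    ∫ s in Ioi 0, halfGammaDensity s * s ^ a = Gamma (a + 1 / 2) / √π := by
  rw [setIntegral_congr_fun measurableSet_Ioi (fun _ hs => halfGammaDensity_mul_rpow hs a),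
    integral_const_mul, Gamma_eq_integral (by linarith), inv_mul_eq_div]

theorem integrableOn_halfGammaDensity : IntegrableOn halfGammaDensity (Ioi 0) := by
  simpa using integrableOn_halfGammaDensity_mul_rpow (a := 0) (by norm_num)

theorem integral_halfGammaDensity : ∫ s in Ioi 0, halfGammaDensity s = 1 := by
  have h := integral_halfGammaDensity_mul_rpow (a := 0) (by norm_num)
  rw [zero_add, Gamma_one_half_eq, div_self (sqrt_pos.mpr pi_pos).ne'] at h
  simpa using h

theorem integrableOn_halfGammaDensity_mul_self :
    IntegrableOn (fun s => halfGammaDensity s * s) (Ioi 0) := by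
  simpa using integrableOn_halfGammaDensity_mul_rpow (a := 1) (by norm_num)

theorem integral_halfGammaDensity_mul_self : ∫ s in Ioi 0, halfGammaDensity s * s = 1 / 2 := by
  have hGamma : Gamma (1 + 1 / 2) = √π / 2 := by
    rw [add_comm, Gamma_add_one (by norm_num), Gamma_one_half_eq]
    ring
  have h := integral_halfGammaDensity_mul_rpow (a := 1) (by norm_num)
  rw [hGamma, div_div_cancel_left' (sqrt_pos.mpr pi_pos).ne'] at h
  simpa using h

theorem sqrt_mul_exp_mul_K0 {r : ℝ} (hr : 0 < r) :
    √(2 * r / π) * exp r * K0 r =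
      ∫ s in Ioi 0, halfGammaDensity s * (√(1 + s / (2 * r)))⁻¹ := by
  rw [K0, setIntegral_Ioi_eq_inv_mul_setIntegral_Ioi_zero _ 1 hr, smul_eq_mul,
    ← integral_const_mul, ← integral_const_mul]
  refine setIntegral_congr_fun measurableSet_Ioi fun s (hs : 0 < s) => ?_
  have hsq : (1 + s / r) ^ 2 - 1 = 2 * r / π * (π * s) * (1 + s / (2 * r)) / r ^ 2 := by
    field_simp
    ring
  have hexponent : -r * (1 + s / r) = -r + -s := by
    field_simp
    ring
  have h2rπ : 0 < √(2 * r / π) := sqrt_pos.mpr (by positivity)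
  have hπs : 0 < √(π * s) := sqrt_pos.mpr (by positivity)
  have h1s : 0 < √(1 + s / (2 * r)) := sqrt_pos.mpr (by positivity)
  rw [hsq, sqrt_div (by positivity) (r ^ 2), sqrt_sq hr.le, sqrt_mul (by positivity),
    sqrt_mul (by positivity), hexponent, exp_add, halfGammaDensity, exp_neg r]
  field_simp

theorem mul_sqrt_mul_exp_mul_K0_sub_one {r : ℝ} (hr : 0 < r) :
    r * (√(2 * r / π) * exp r * K0 r - 1) =
      ∫ s in Ioi 0, halfGammaDensity s * (r * ((√(1 + s / (2 * r)))⁻¹ - 1)) := by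
  have hint : IntegrableOn (fun s => halfGammaDensity s * (√(1 + s / (2 * r)))⁻¹) (Ioi 0) := by
    refine integrableOn_halfGammaDensity.mul_bdd (c := 1) (by fun_prop) ?_
    filter_upwards [ae_restrict_mem measurableSet_Ioi] with s (hs : 0 < s)
    rw [norm_inv, norm_of_nonneg (sqrt_nonneg _)]
    exact inv_le_one_of_one_le₀ (one_le_sqrt.mpr (by simp; positivity))
  have hsplit : ∀ s, halfGammaDensity s * (r * ((√(1 + s / (2 * r)))⁻¹ - 1)) =
      r * (halfGammaDensity s * (√(1 + s / (2 * r)))⁻¹) - halfGammaDensity s * r := fun s => by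
    ring
  simp_rw [hsplit]
  rw [integral_sub (hint.const_mul r) (integrableOn_halfGammaDensity.mul_const r),
    integral_const_mul, integral_mul_const, ← sqrt_mul_exp_mul_K0 hr, integral_halfGammaDensity]
  ring

theorem tendsto_integral_halfGammaDensity_mul :
    Tendsto (fun r => ∫ s in Ioi 0, halfGammaDensity s * (r * ((√(1 + s / (2 * r)))⁻¹ - 1)))
      atTop (𝓝 (-1 / 8)) := by
  have hlimit : ∫ s in Ioi 0, halfGammaDensity s * (-s / 4) = -1 / 8 := by
    simp_rw [mul_div_assoc', mul_neg, neg_div, div_eq_mul_inv _ (4 : ℝ)]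
    rw [integral_neg, integral_mul_const, integral_halfGammaDensity_mul_self]
    norm_num
  rw [← hlimit]
  refine tendsto_integral_filter_of_dominated_convergence (fun s => halfGammaDensity s * s / 4)
    (Eventually.of_forall fun r => by unfold halfGammaDensity; fun_prop) ?_
    (integrableOn_halfGammaDensity_mul_self.div_const 4) ?_
  · filter_upwards [eventually_gt_atTop 0] with r hr
    filter_upwards [ae_restrict_mem measurableSet_Ioi] with s (hs : 0 < s)
    have hw : 0 ≤ halfGammaDensity s := by unfold halfGammaDensity; positivity
    rw [norm_mul, norm_mul, norm_of_nonneg hw, norm_of_nonneg hr.le, mul_div_assoc]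
    gcongr
    calc r * ‖(√(1 + s / (2 * r)))⁻¹ - 1‖ ≤ r * (s / (2 * r) / 2) := by
          gcongr
          exact abs_inv_sqrt_one_add_sub_one_le (by positivity)
      _ = s / 4 := by field_simp; ring
  · exact Eventually.of_forall fun s =>
      (tendsto_mul_inv_sqrt_one_add_div_sub_one s).const_mul (halfGammaDensity s)

/-- The second term of the asymptotic expansion of `K₀` at infinity has
coefficient `−1/8`: `r·(√(2r/π)·e^r·K₀(r) − 1) → −1/8` as `r → ∞`. -/
theorem K0_asymptotic_second_term :
    Tendsto (fun r : ℝ => r * (Real.sqrt (2 * r / π) * Real.exp r * K0 r - 1)) atTop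
      (nhds (-1 / 8)) := by
  refine tendsto_integral_halfGammaDensity_mul.congr' ?_
  filter_upwards [eventually_gt_atTop 0] with r hr
  exact (mul_sqrt_mul_exp_mul_K0_sub_one hr).symm
end

section
/- Twisted Poincaré inequality with sharp constant: let ξ ∈ ℝ² and let f : ℝ² → ℂ be continuously differentiable and quasi-periodic with character ξ, i.e. f(x + m) = e^{2πi⟨ξ, m⟩}·f(x) for all x ∈ ℝ² and m ∈ ℤ². Then ∫_{[0,1]²} ‖∇f(x)‖² dx ≥ 4π²·d(ξ, ℤ²)²·∫_{[0,1]²} |f(x)|² dx, where d(ξ, ℤ²) = inf_{m ∈ ℤ²} |ξ − m| is the Euclidean distance from ξ to the lattice ℤ². In particular, if ξ ∉ ℤ², the bottom of the spectrum of the ξ-twisted Laplacian on the torus is strictly positive. -/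
open MeasureTheory Real

noncomputable def latticeDist (ξ : ℝ × ℝ) : ℝ :=
  sInf {r : ℝ | ∃ m n : ℤ, r = Real.sqrt ((ξ.1 - m) ^ 2 + (ξ.2 - n) ^ 2)}

/-!
Multiplying a function with `g 1 = e^{2πiθ} g 0` by `e^{-2πiθt}` gives a function `h` with
`h 0 = h 1`, and `e^{-2πiθt} g' = h' + 2πiθ h` has Fourier coefficients `2πi(n + θ) ĥ(n)` on
`[0, 1]`. By Parseval, `∫₀¹ |g'|² ≥ 4π² min_n (n + θ)² ∫₀¹ |g|²`, and the minimum is attained at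
`n = -round θ`. Applying this on every horizontal and every vertical segment of the unit square
and integrating (Fubini) gives one inequality per partial derivative; their sum is the claim, as
`d(ξ, ℤ²)² = (ξ₁ - round ξ₁)² + (ξ₂ - round ξ₂)²`.
-/

section FourierCoeffOn

variable {a b : ℝ} (hab : a < b) {f g f' : ℝ → ℂ}

theorem fourierCoeffOn_add (hf : IntervalIntegrable f volume a b)
    (hg : IntervalIntegrable g volume a b) (n : ℤ) :
    fourierCoeffOn hab (fun x => f x + g x) n =
      fourierCoeffOn hab f n + fourierCoeffOn hab g n := by
  have hfourier :
      ContinuousOn (fun x : ℝ => fourier (-n) (x : AddCircle (b - a))) (Set.uIcc a b) :=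
    ((map_continuous _).comp (AddCircle.continuous_mk' _)).continuousOn
  simp only [fourierCoeffOn_eq_integral, smul_eq_mul, mul_add]
  rw [intervalIntegral.integral_add (hf.continuousOn_mul hfourier) (hg.continuousOn_mul hfourier),
    smul_add]

theorem fourierCoeffOn_deriv_of_eq (hf : ∀ x ∈ Set.uIcc a b, HasDerivAt f (f' x) x)
    (hf' : IntervalIntegrable f' volume a b) (hfab : f a = f b) (n : ℤ) :
    fourierCoeffOn hab f' n = 2 * π * Complex.I * n / (b - a) * fourierCoeffOn hab f n := by
  rcases eq_or_ne n 0 with rfl | hn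
  · simp [fourierCoeffOn_eq_integral, intervalIntegral.integral_eq_sub_of_hasDerivAt hf hf', hfab]
  · have hba : (b : ℂ) - a ≠ 0 := by exact_mod_cast (sub_pos.2 hab).ne'
    rw [fourierCoeffOn_of_hasDerivAt hab hn hf hf', hfab, sub_self, mul_zero, zero_sub]
    field_simp

theorem hasSum_sq_fourierCoeffOn_of_continuous (hf : Continuous f) :
    HasSum (fun n => ‖fourierCoeffOn hab f n‖ ^ 2) ((b - a)⁻¹ • ∫ x in a..b, ‖f x‖ ^ 2) :=
  hasSum_sq_fourierCoeffOn hab <| (memLp_two_iff_integrable_sq_norm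
    hf.aestronglyMeasurable).2 (hf.norm.pow 2).integrableOn_Ioc

end FourierCoeffOn

noncomputable def untwist (θ : ℝ) (g : ℝ → ℂ) (t : ℝ) : ℂ :=
  Complex.exp (-(2 * π * Complex.I * θ * t)) * g t

section Untwist

variable {θ : ℝ} {g g' : ℝ → ℂ}

@[simp]
theorem norm_untwist (t : ℝ) : ‖untwist θ g t‖ = ‖g t‖ := by
  simp [untwist, Complex.norm_exp]

theorem untwist_one (hg : g 1 = Complex.exp (2 * π * Complex.I * θ) * g 0) :
    untwist θ g 1 = untwist θ g 0 := by
  simp [untwist, hg, ← mul_assoc, ← Complex.exp_add]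

theorem Continuous.untwist (hg : Continuous g) : Continuous (untwist θ g) := by
  unfold _root_.untwist
  fun_prop

theorem HasDerivAt.untwist {t : ℝ} (hg : HasDerivAt g (g' t) t) :
    HasDerivAt (untwist θ g) (untwist θ g' t - 2 * π * Complex.I * θ * untwist θ g t) t := by
  have hexponent :
      HasDerivAt (fun s : ℝ => -(2 * π * Complex.I * θ * s)) (-(2 * π * Complex.I * θ)) t := by
    simpa using ((hasDerivAt_id t).ofReal_comp.const_mul (2 * π * Complex.I * θ)).fun_neg
  refine (hexponent.cexp.fun_mul hg).congr_deriv ?_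
  simp only [_root_.untwist]
  ring

theorem fourierCoeffOn_untwist_deriv (hg : ∀ t, HasDerivAt g (g' t) t) (hg' : Continuous g')
    (hg1 : g 1 = Complex.exp (2 * π * Complex.I * θ) * g 0) (n : ℤ) :
    fourierCoeffOn zero_lt_one (untwist θ g') n =
      2 * π * Complex.I * (n + θ) * fourierCoeffOn zero_lt_one (untwist θ g) n := by
  set c : ℂ := 2 * π * Complex.I * θ
  set D : ℝ → ℂ := fun t => untwist θ g' t - c * untwist θ g t
  set E : ℝ → ℂ := fun t => c * untwist θ g t
  have hE : Continuous E :=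
    continuous_const.mul (continuous_iff_continuousAt.2 fun t => (hg t).continuousAt).untwist
  have hD : Continuous D := hg'.untwist.sub hE
  have hsplit : untwist θ g' = fun t => D t + E t := by
    funext t
    simp only [D, E]
    ring
  rw [hsplit, fourierCoeffOn_add _ (hD.intervalIntegrable _ _) (hE.intervalIntegrable _ _),
    fourierCoeffOn.const_mul, fourierCoeffOn_deriv_of_eq _ (fun t _ => (hg t).untwist)
      (hD.intervalIntegrable _ _) (untwist_one hg1).symm]
  push_cast
  ring

theorem twisted_wirtinger (hg : ∀ t, HasDerivAt g (g' t) t) (hg' : Continuous g')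
    (hg1 : g 1 = Complex.exp (2 * π * Complex.I * θ) * g 0) :
    4 * π ^ 2 * (θ - round θ) ^ 2 * ∫ t in 0..1, ‖g t‖ ^ 2 ≤ ∫ t in 0..1, ‖g' t‖ ^ 2 := by
  have hcont : Continuous g := continuous_iff_continuousAt.2 fun t => (hg t).continuousAt
  have hsum := hasSum_sq_fourierCoeffOn_of_continuous zero_lt_one (hcont.untwist (θ := θ))
  have hsum' := hasSum_sq_fourierCoeffOn_of_continuous zero_lt_one (hg'.untwist (θ := θ))
  simp only [norm_untwist, sub_zero, inv_one, one_smul] at hsum hsum'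
  refine hasSum_le (fun n => ?_) (hsum.mul_left (4 * π ^ 2 * (θ - round θ) ^ 2)) hsum'
  have hround : (θ - round θ) ^ 2 ≤ (n + θ) ^ 2 :=
    sq_le_sq.2 (by simpa [add_comm] using round_le θ (-n))
  have hnorm : ‖2 * π * Complex.I * (n + θ)‖ ^ 2 = 4 * π ^ 2 * (n + θ) ^ 2 := by
    rw [show 2 * π * Complex.I * (n + θ) = ((2 * π * (n + θ) : ℝ) : ℂ) * Complex.I by
        push_cast; ring,
      norm_mul, Complex.norm_I, Complex.norm_real, norm_eq_abs, mul_one, sq_abs]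
    ring
  rw [fourierCoeffOn_untwist_deriv hg hg' hg1, norm_mul, mul_pow, hnorm]
  gcongr

end Untwist

theorem setIntegral_prod_le_of_forall_le {α β : Type*} [MeasurableSpace α] [MeasurableSpace β]
    {μ : Measure α} {ν : Measure β} [SFinite μ] [SFinite ν] {s : Set α} {t : Set β}
    (hs : MeasurableSet s) {F G : α × β → ℝ} (hF : IntegrableOn F (s ×ˢ t) (μ.prod ν))
    (hG : IntegrableOn G (s ×ˢ t) (μ.prod ν))
    (hFG : ∀ x ∈ s, ∫ y in t, F (x, y) ∂ν ≤ ∫ y in t, G (x, y) ∂ν) :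
    ∫ z in s ×ˢ t, F z ∂μ.prod ν ≤ ∫ z in s ×ˢ t, G z ∂μ.prod ν := by
  rw [setIntegral_prod F hF, setIntegral_prod G hG]
  rw [IntegrableOn, ← Measure.prod_restrict] at hF hG
  exact setIntegral_mono_on hF.integral_prod_left hG.integral_prod_left hs hFG

section PartialDeriv

variable {E : Type*} [NormedAddCommGroup E] [NormedSpace ℝ E] {f : ℝ × ℝ → E}

theorem HasFDerivAt.hasDerivAt_snd {x y : ℝ} {f' : ℝ × ℝ →L[ℝ] E}
    (hf : HasFDerivAt f f' (x, y)) : HasDerivAt (fun t => f (x, t)) (f' (0, 1)) y :=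
  hf.comp_hasDerivAt y ((hasDerivAt_const y x).prodMk (hasDerivAt_id y))

theorem ContDiff.continuous_deriv_snd (hf : ContDiff ℝ 1 f) :
    Continuous fun z : ℝ × ℝ => deriv (fun t => f (z.1, t)) z.2 := by
  have hpartial : ∀ z : ℝ × ℝ, deriv (fun t => f (z.1, t)) z.2 = fderiv ℝ f z (0, 1) := fun z =>
    ((hf.differentiable one_ne_zero z).hasFDerivAt.hasDerivAt_snd).deriv
  simp_rw [hpartial]
  exact (hf.continuous_fderiv one_ne_zero).clm_apply continuous_const

theorem ContDiff.continuous_deriv_fst (hf : ContDiff ℝ 1 f) :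
    Continuous fun z : ℝ × ℝ => deriv (fun t => f (t, z.2)) z.1 :=
  (hf.comp (contDiff_snd.prodMk contDiff_fst)).continuous_deriv_snd.comp continuous_swap

end PartialDeriv

section UnitSquare

variable {f : ℝ × ℝ → ℂ}

theorem twisted_wirtinger_square_snd (θ : ℝ) (hf : ContDiff ℝ 1 f)
    (hq : ∀ x, f (x, 1) = Complex.exp (2 * π * Complex.I * θ) * f (x, 0)) :
    4 * π ^ 2 * (θ - round θ) ^ 2 * ∫ z in Set.Icc (0 : ℝ) 1 ×ˢ Set.Icc (0 : ℝ) 1, ‖f z‖ ^ 2 ≤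
      ∫ z in Set.Icc (0 : ℝ) 1 ×ˢ Set.Icc (0 : ℝ) 1, ‖deriv (fun t => f (z.1, t)) z.2‖ ^ 2 := by
  rw [← integral_const_mul, Measure.volume_eq_prod]
  refine setIntegral_prod_le_of_forall_le measurableSet_Icc
    ((continuous_const.mul (hf.continuous.norm.pow 2)).continuousOn.integrableOn_compact
      (isCompact_Icc.prod isCompact_Icc))
    ((hf.continuous_deriv_snd.norm.pow 2).continuousOn.integrableOn_compact
      (isCompact_Icc.prod isCompact_Icc))
    fun x _ => ?_
  simp only [integral_const_mul, integral_Icc_eq_integral_Ioc,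
    ← intervalIntegral.integral_of_le zero_le_one]
  have hslice : ContDiff ℝ 1 fun t => f (x, t) := hf.comp (contDiff_const.prodMk contDiff_id)
  exact twisted_wirtinger (fun y => (hslice.differentiable one_ne_zero y).hasDerivAt)
    (hslice.continuous_deriv le_rfl) (hq x)

theorem twisted_wirtinger_square_fst (θ : ℝ) (hf : ContDiff ℝ 1 f)
    (hq : ∀ y, f (1, y) = Complex.exp (2 * π * Complex.I * θ) * f (0, y)) :
    4 * π ^ 2 * (θ - round θ) ^ 2 * ∫ z in Set.Icc (0 : ℝ) 1 ×ˢ Set.Icc (0 : ℝ) 1, ‖f z‖ ^ 2 ≤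
      ∫ z in Set.Icc (0 : ℝ) 1 ×ˢ Set.Icc (0 : ℝ) 1, ‖deriv (fun t => f (t, z.2)) z.1‖ ^ 2 := by
  have hswap := twisted_wirtinger_square_snd θ (hf.comp (contDiff_snd.prodMk contDiff_fst)) hq
  rw [Measure.volume_eq_prod] at hswap ⊢
  rwa [← setIntegral_prod_swap, ← setIntegral_prod_swap _ _
    (fun z => ‖deriv (fun t => f (t, z.2)) z.1‖ ^ 2)]

end UnitSquare

theorem latticeDist_sq_le (ξ : ℝ × ℝ) :
    latticeDist ξ ^ 2 ≤ (ξ.1 - round ξ.1) ^ 2 + (ξ.2 - round ξ.2) ^ 2 := by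
  have hdist : latticeDist ξ ≤ √((ξ.1 - round ξ.1) ^ 2 + (ξ.2 - round ξ.2) ^ 2) :=
    csInf_le ⟨0, by rintro _ ⟨m, n, rfl⟩; positivity⟩ ⟨round ξ.1, round ξ.2, rfl⟩
  have hnonneg : 0 ≤ latticeDist ξ := Real.sInf_nonneg (by rintro _ ⟨m, n, rfl⟩; positivity)
  calc latticeDist ξ ^ 2 ≤ √((ξ.1 - round ξ.1) ^ 2 + (ξ.2 - round ξ.2) ^ 2) ^ 2 := by gcongr
    _ = _ := Real.sq_sqrt (by positivity)

/-- Twisted Poincaré inequality with sharp constant: for `f : ℝ² → ℂ`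
continuously differentiable and quasi-periodic with character `ξ`,
`∫_{[0,1]²} ‖∇f‖² ≥ 4π²·d(ξ,ℤ²)²·∫_{[0,1]²} |f|²`. -/
theorem twisted_poincare_inequality (ξ : ℝ × ℝ)
    (f : ℝ × ℝ → ℂ) (hf : ContDiff ℝ 1 f)
    (hquasi : ∀ x : ℝ × ℝ, ∀ m n : ℤ,
      f (x.1 + m, x.2 + n) =
        Complex.exp (2 * π * Complex.I * (ξ.1 * m + ξ.2 * n)) * f x) :
    (∫ x in Set.Icc ((0 : ℝ), (0 : ℝ)) (1, 1),
        (‖deriv (fun t => f (t, x.2)) x.1‖ ^ 2 +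
         ‖deriv (fun t => f (x.1, t)) x.2‖ ^ 2)) ≥
      4 * π ^ 2 * latticeDist ξ ^ 2 *
        ∫ x in Set.Icc ((0 : ℝ), (0 : ℝ)) (1, 1), ‖f x‖ ^ 2 := by
  have hfst := twisted_wirtinger_square_fst ξ.1 hf fun y => by simpa using hquasi (0, y) 1 0
  have hsnd := twisted_wirtinger_square_snd ξ.2 hf fun x => by simpa using hquasi (x, 0) 0 1
  have hintegral_nonneg : 0 ≤ ∫ z in Set.Icc (0 : ℝ) 1 ×ˢ Set.Icc (0 : ℝ) 1, ‖f z‖ ^ 2 :=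
    setIntegral_nonneg (measurableSet_Icc.prod measurableSet_Icc) fun _ _ => by positivity
  rw [ge_iff_le, ← Set.Icc_prod_Icc, integral_add
    ((hf.continuous_deriv_fst.norm.fun_pow 2).continuousOn.integrableOn_compact
      (isCompact_Icc.prod isCompact_Icc))
    ((hf.continuous_deriv_snd.norm.fun_pow 2).continuousOn.integrableOn_compact
      (isCompact_Icc.prod isCompact_Icc))]
  calc 4 * π ^ 2 * latticeDist ξ ^ 2 * ∫ z in Set.Icc (0 : ℝ) 1 ×ˢ Set.Icc (0 : ℝ) 1, ‖f z‖ ^ 2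
      ≤ 4 * π ^ 2 * ((ξ.1 - round ξ.1) ^ 2 + (ξ.2 - round ξ.2) ^ 2) *
          ∫ z in Set.Icc (0 : ℝ) 1 ×ˢ Set.Icc (0 : ℝ) 1, ‖f z‖ ^ 2 := by
        gcongr
        exact latticeDist_sq_le ξ
    _ = _ := by ring
    _ ≤ _ := add_le_add hfst hsnd
end
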